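/- For every formula φ of modal team logic MTL, φ is satisfiable (there exist a Kripke structure K and a team T in K with (K,T) ⊨ φ) if and only if its standard translation st_x(φ) ∈ FO²(~) is satisfiable (there exist a τ_M-structure ℬ and a team S in ℬ with domain containing {x} such that (ℬ,S) ⊨ st_x(φ)). -/

import Mathlib

set_option autoImplicit false

open Classical

/-! ## First-order vocabularies, structures, terms -/

/-- A first-order vocabulary: function symbols and relation symbols with arities. -/
structure Vocab : Type 1 where
  Func : Type
  fArity : Func → ℕ
  Rel : Type
  rArity : Rel → ℕ

/-- A `τ`-structure (with nonempty domain, as usual in first-order logic). -/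
structure Struc (τ : Vocab) : Type 1 where
  Dom : Type
  nonempty : Nonempty Dom
  funcs : ∀ f : τ.Func, (Fin (τ.fArity f) → Dom) → Dom
  rels : ∀ R : τ.Rel, (Fin (τ.rArity R) → Dom) → Prop

/-- `τ`-terms over the variables `ℕ`. -/
inductive Term (τ : Vocab) : Type where
  | var : ℕ → Term τ
  | app : (f : τ.Func) → (Fin (τ.fArity f) → Term τ) → Term τ

namespace Term

variable {τ : Vocab}

/-- The set of variables occurring in a term. -/
def vars : Term τ → Set ℕ
  | .var x => {x}
  | .app _ ts => ⋃ i, (ts i).vars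

/-- Evaluation of a term under a (total) assignment. -/
def eval (A : Struc τ) (s : ℕ → A.Dom) : Term τ → A.Dom
  | .var x => s x
  | .app f ts => A.funcs f fun i => (ts i).eval A s

/-- Size of a term. -/
def size : Term τ → ℕ
  | .var _ => 1
  | .app _ ts => 1 + ∑ i, (ts i).size

end Term

/-! ## Assignments and teams -/

/-- An assignment in `A` with domain `X`. -/
abbrev Assign {τ : Vocab} (A : Struc τ) (X : Set ℕ) : Type := X → A.Dom

/-- A team in `A` with domain `X`: a set of assignments with domain `X`. -/
abbrev Team {τ : Vocab} (A : Struc τ) (X : Set ℕ) : Type := Set (Assign A X)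

namespace Assign

variable {τ : Vocab} {A : Struc τ}

/-- Extend a partial assignment to a total one (junk values outside the domain). -/
noncomputable def toTotal {X : Set ℕ} (s : Assign A X) : ℕ → A.Dom :=
  fun n => if h : n ∈ X then s ⟨n, h⟩ else Classical.choice A.nonempty

/-- Restriction `s↾Y` of an assignment to a smaller domain. -/
def restrict {X Y : Set ℕ} (h : Y ⊆ X) (s : Assign A X) : Assign A Y :=
  fun y => s ⟨y.1, h y.2⟩

/-- The supplemented assignment `s^x_a`, with domain `X ∪ {x}`, mapping `x` to `a`
and any other `y ∈ X` to `s y`. -/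
def supp {X : Set ℕ} (s : Assign A X) (x : ℕ) (a : A.Dom) : Assign A (X ∪ {x}) :=
  fun y =>
    if h : (y : ℕ) = x then a
    else s ⟨y.1, by
      have hy := y.2
      simp only [Set.mem_union, Set.mem_singleton_iff] at hy
      exact hy.resolve_right h⟩

end Assign

namespace Team

variable {τ : Vocab} {A : Struc τ}

/-- Restriction `T↾Y` of a team to a smaller domain. -/
def restrict {X Y : Set ℕ} (h : Y ⊆ X) (T : Team A X) : Team A Y :=
  Assign.restrict h '' T

/-- The supplemented team `T^x_f` for a (supplementing) function
`f` on assignments. -/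
def supp {X : Set ℕ} (T : Team A X) (x : ℕ) (f : Assign A X → Set A.Dom) :
    Team A (X ∪ {x}) :=
  { t | ∃ s ∈ T, ∃ a ∈ f s, t = Assign.supp s x a }

end Team

/-- `t̄⟨T⟩`: the set of evaluations of the tuple of terms `ts` over a team `T`. -/
noncomputable def tupleEval {τ : Vocab} (A : Struc τ) {X : Set ℕ} {k : ℕ}
    (ts : Fin k → Term τ) (T : Team A X) : Set (Fin k → A.Dom) :=
  (fun s i => (ts i).eval A (Assign.toTotal s)) '' T

/-! ## Classical first-order formulas (with equality) and Tarski semantics -/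

inductive FOFormula (τ : Vocab) : Type where
  | rel : (R : τ.Rel) → (Fin (τ.rArity R) → Term τ) → FOFormula τ
  | eq : Term τ → Term τ → FOFormula τ
  | not : FOFormula τ → FOFormula τ
  | and : FOFormula τ → FOFormula τ → FOFormula τ
  | or : FOFormula τ → FOFormula τ → FOFormula τ
  | ex : ℕ → FOFormula τ → FOFormula τ
  | all : ℕ → FOFormula τ → FOFormula τ

namespace FOFormula

variable {τ : Vocab}

/-- Free variables. -/
def Fr : FOFormula τ → Set ℕ
  | .rel _ ts => ⋃ i, (ts i).vars
  | .eq t u => t.vars ∪ u.vars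
  | .not φ => φ.Fr
  | .and φ ψ => φ.Fr ∪ ψ.Fr
  | .or φ ψ => φ.Fr ∪ ψ.Fr
  | .ex x φ => φ.Fr \ {x}
  | .all x φ => φ.Fr \ {x}

/-- All variables (free and bound). -/
def vars : FOFormula τ → Set ℕ
  | .rel _ ts => ⋃ i, (ts i).vars
  | .eq t u => t.vars ∪ u.vars
  | .not φ => φ.vars
  | .and φ ψ => φ.vars ∪ ψ.vars
  | .or φ ψ => φ.vars ∪ ψ.vars
  | .ex x φ => insert x φ.vars
  | .all x φ => insert x φ.vars

/-- Quantifier rank. -/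
def qr : FOFormula τ → ℕ
  | .rel _ _ => 0
  | .eq _ _ => 0
  | .not φ => φ.qr
  | .and φ ψ => max φ.qr ψ.qr
  | .or φ ψ => max φ.qr ψ.qr
  | .ex _ φ => φ.qr + 1
  | .all _ φ => φ.qr + 1

/-- Size (length in a suitable encoding). -/
def size : FOFormula τ → ℕ
  | .rel _ ts => 1 + ∑ i, (ts i).size
  | .eq t u => 1 + t.size + u.size
  | .not φ => φ.size + 1
  | .and φ ψ => φ.size + ψ.size + 1
  | .or φ ψ => φ.size + ψ.size + 1
  | .ex _ φ => φ.size + 2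
  | .all _ φ => φ.size + 2

/-- Width: the number of distinct variables occurring in the formula. -/
noncomputable def width (φ : FOFormula τ) : ℕ := φ.vars.ncard

/-- Tarski satisfaction over total assignments. -/
def Sat (A : Struc τ) (s : ℕ → A.Dom) : FOFormula τ → Prop
  | .rel R ts => A.rels R fun i => (ts i).eval A s
  | .eq t u => t.eval A s = u.eval A s
  | .not φ => ¬ φ.Sat A s
  | .and φ ψ => φ.Sat A s ∧ ψ.Sat A s
  | .or φ ψ => φ.Sat A s ∨ ψ.Sat A s
  | .ex x φ => ∃ a : A.Dom, φ.Sat A (Function.update s x a)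
  | .all x φ => ∀ a : A.Dom, φ.Sat A (Function.update s x a)

end FOFormula

/-! ## Generalized dependencies -/

/-- The vocabulary with a single `k`-ary predicate. -/
def depVocab (k : ℕ) : Vocab where
  Func := Empty
  fArity := fun e => e.elim
  Rel := Unit
  rArity := fun _ => k

/-- A family of generalized dependencies: each index `i` has an arity `ar i` and a
first-order *sentence* over a single `ar i`-ary predicate. -/
structure DepFamily : Type 1 where
  idx : Type
  ar : idx → ℕ
  form : ∀ i : idx, FOFormula (depVocab (ar i))
  sentence : ∀ i : idx, (form i).Fr = ∅

/-- The `depVocab k`-structure with domain that of `A` interpreting the predicate as `S`. -/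
def depStruc {τ : Vocab} (A : Struc τ) {k : ℕ} (S : Set (Fin k → A.Dom)) :
    Struc (depVocab k) where
  Dom := A.Dom
  nonempty := A.nonempty
  funcs := fun f => f.elim
  rels := fun _ v => v ∈ S

/-- `A ⊨ δ(S)`: the dependency sentence `δ` holds in `(dom A, S)`. -/
def DepSat {τ : Vocab} (A : Struc τ) {k : ℕ} (δ : FOFormula (depVocab k))
    (S : Set (Fin k → A.Dom)) : Prop :=
  ∀ s : ℕ → A.Dom, δ.Sat (depStruc A S) s

/-! ## Team logic FO(~,𝒟) -/

inductive TFormula (τ : Vocab) (D : DepFamily) : Type where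
  | base : FOFormula τ → TFormula τ D
  | atom : (i : D.idx) → (Fin (D.ar i) → Term τ) → TFormula τ D
  | tnot : TFormula τ D → TFormula τ D
  | tand : TFormula τ D → TFormula τ D → TFormula τ D
  | tor : TFormula τ D → TFormula τ D → TFormula τ D
  | tex : ℕ → TFormula τ D → TFormula τ D
  | tall : ℕ → TFormula τ D → TFormula τ D

namespace TFormula

variable {τ : Vocab} {D : DepFamily}

/-- Free variables. -/
def Fr : TFormula τ D → Set ℕ
  | .base α => α.Fr
  | .atom _ ts => ⋃ i, (ts i).vars
  | .tnot φ => φ.Fr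
  | .tand φ ψ => φ.Fr ∪ ψ.Fr
  | .tor φ ψ => φ.Fr ∪ ψ.Fr
  | .tex x φ => φ.Fr \ {x}
  | .tall x φ => φ.Fr \ {x}

/-- All variables (free and bound). -/
def vars : TFormula τ D → Set ℕ
  | .base α => α.vars
  | .atom _ ts => ⋃ i, (ts i).vars
  | .tnot φ => φ.vars
  | .tand φ ψ => φ.vars ∪ ψ.vars
  | .tor φ ψ => φ.vars ∪ ψ.vars
  | .tex x φ => insert x φ.vars
  | .tall x φ => insert x φ.vars

/-- Quantifier rank. -/
def qr : TFormula τ D → ℕ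
  | .base _ => 0
  | .atom _ _ => 0
  | .tnot φ => φ.qr
  | .tand φ ψ => max φ.qr ψ.qr
  | .tor φ ψ => max φ.qr ψ.qr
  | .tex _ φ => φ.qr + 1
  | .tall _ φ => φ.qr + 1

/-- Size (length in a suitable encoding). -/
def size : TFormula τ D → ℕ
  | .base α => α.size
  | .atom _ ts => 1 + ∑ i, (ts i).size
  | .tnot φ => φ.size + 1
  | .tand φ ψ => φ.size + ψ.size + 1
  | .tor φ ψ => φ.size + ψ.size + 1
  | .tex _ φ => φ.size + 2
  | .tall _ φ => φ.size + 2

/-- Width: the number of distinct variables occurring in the formula. -/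
noncomputable def width (φ : TFormula τ D) : ℕ := φ.vars.ncard

end TFormula

/-- Team semantics of FO(~,𝒟). -/
def TSat {τ : Vocab} {D : DepFamily} (A : Struc τ) :
    TFormula τ D → (X : Set ℕ) → Team A X → Prop
  | .base α, _, T => ∀ s ∈ T, α.Sat A (Assign.toTotal s)
  | .atom i ts, _, T => DepSat A (D.form i) (tupleEval A ts T)
  | .tnot φ, X, T => ¬ TSat A φ X T
  | .tand φ ψ, X, T => TSat A φ X T ∧ TSat A ψ X T
  | .tor φ ψ, X, T => ∃ S U : Team A X, S ∪ U = T ∧ TSat A φ X S ∧ TSat A ψ X U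
  | .tex x φ, X, T => ∃ f : Assign A X → Set A.Dom,
      (∀ s ∈ T, (f s).Nonempty) ∧ TSat A φ (X ∪ {x}) (T.supp x f)
  | .tall x φ, X, T => TSat A φ (X ∪ {x}) (T.supp x fun _ => (Set.univ : Set A.Dom))

/-- Equivalence of team-logic formulas: same satisfying pairs `(A, T)`,
over all teams whose domain contains the free variables of both. -/
def TEquiv {τ : Vocab} {D : DepFamily} (φ ψ : TFormula τ D) : Prop :=
  ∀ (A : Struc τ) (X : Set ℕ), φ.Fr ∪ ψ.Fr ⊆ X →
    ∀ T : Team A X, TSat A φ X T ↔ TSat A ψ X T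

/-- The family of no dependencies at all: plain FO(~). -/
def emptyDeps : DepFamily where
  idx := Empty
  ar := fun e => e.elim
  form := fun e => e.elim
  sentence := fun e => e.elim

/-- `Eβ := ~¬β`. -/
def TFormula.E {τ : Vocab} {D : DepFamily} (β : FOFormula τ) : TFormula τ D :=
  .tnot (.base (.not β))

/-- Boolean disjunction `φ ⊻ ψ := ~(~φ ∧ ~ψ)`. -/
def TFormula.bdis {τ : Vocab} {D : DepFamily} (φ ψ : TFormula τ D) : TFormula τ D :=
  .tnot (.tand (.tnot φ) (.tnot ψ))

/-- Iterated splitting disjunction (nonempty list, head plus tail). -/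
def bigOr {τ : Vocab} {D : DepFamily} :
    TFormula τ D → List (TFormula τ D) → TFormula τ D
  | φ, [] => φ
  | φ, ψ :: l => .tor φ (bigOr ψ l)

/-- Iterated conjunction (nonempty list, head plus tail). -/
def bigAnd {τ : Vocab} {D : DepFamily} :
    TFormula τ D → List (TFormula τ D) → TFormula τ D
  | φ, [] => φ
  | φ, ψ :: l => .tand φ (bigAnd ψ l)

/-- Iterated Boolean disjunction (nonempty list, head plus tail). -/
def bigBdis {τ : Vocab} {D : DepFamily} :
    TFormula τ D → List (TFormula τ D) → TFormula τ D
  | φ, [] => φ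
  | φ, ψ :: l => TFormula.bdis φ (bigBdis ψ l)

/-- `⋁_{i=1}^{n+1} χ_i` (splitting disjunction). -/
def finBigOr {τ : Vocab} {D : DepFamily} {n : ℕ}
    (χ : Fin (n + 1) → TFormula τ D) : TFormula τ D :=
  bigOr (χ 0) (List.ofFn fun i : Fin n => χ i.succ)

/-- `⋀_{i=1}^{n+1} χ_i`. -/
def finBigAnd {τ : Vocab} {D : DepFamily} {n : ℕ}
    (χ : Fin (n + 1) → TFormula τ D) : TFormula τ D :=
  bigAnd (χ 0) (List.ofFn fun i : Fin n => χ i.succ)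

/-- The tower function: `expTower 0 m = m`, `expTower (k+1) m = 2 ^ expTower k m`. -/
def expTower : ℕ → ℕ → ℕ
  | 0, m => m
  | k + 1, m => 2 ^ expTower k m

/-! ## The second-order translation η (semantically) -/

/-- The tuple `x̄;y`: `x̄` itself if `y` occurs in `x̄`, and `x̄` extended by `y` otherwise. -/
noncomputable def semico {n : ℕ} (xs : Fin n → ℕ) (y : ℕ) : Σ m : ℕ, Fin m → ℕ :=
  if y ∈ Set.range xs then ⟨n, xs⟩ else ⟨n + 1, Fin.snoc xs y⟩

/-- `etaSem A φ n xs R` expresses `A ⊨ η^{x̄}_φ(R)`, i.e. the classical (second-order)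
semantics of the translation `η^{x̄}_φ` applied to the relation `R`. -/
def etaSem {τ : Vocab} {D : DepFamily} (A : Struc τ) :
    TFormula τ D → (n : ℕ) → (Fin n → ℕ) → Set (Fin n → A.Dom) → Prop
  | .base α, _, xs, R =>
      ∀ s : ℕ → A.Dom, (fun i => s (xs i)) ∈ R → α.Sat A s
  | .atom i ts, _, xs, R =>
      ∃ S : Set (Fin (D.ar i) → A.Dom),
        (∀ v : Fin (D.ar i) → A.Dom,
          v ∈ S ↔ ∃ s : ℕ → A.Dom,
            (fun j => s (xs j)) ∈ R ∧ (fun j => (ts j).eval A s) = v) ∧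
        DepSat A (D.form i) S
  | .tnot φ, n, xs, R => ¬ etaSem A φ n xs R
  | .tand φ ψ, n, xs, R => etaSem A φ n xs R ∧ etaSem A ψ n xs R
  | .tor φ ψ, n, xs, R =>
      ∃ S U : Set (Fin n → A.Dom),
        (∀ v, v ∈ R ↔ v ∈ S ∨ v ∈ U) ∧ etaSem A φ n xs S ∧ etaSem A ψ n xs U
  | .tex y φ, _, xs, R =>
      ∃ S : Set (Fin (semico xs y).1 → A.Dom),
        (∀ s : ℕ → A.Dom,
          (∃ b : A.Dom, (fun i => Function.update s y b (xs i)) ∈ R) ↔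
          (∃ b : A.Dom, (fun j => Function.update s y b ((semico xs y).2 j)) ∈ S)) ∧
        etaSem A φ (semico xs y).1 (semico xs y).2 S
  | .tall y φ, _, xs, R =>
      ∃ S : Set (Fin (semico xs y).1 → A.Dom),
        (∀ s : ℕ → A.Dom,
          (∃ b : A.Dom, (fun i => Function.update s y b (xs i)) ∈ R) ↔
          (∃ b : A.Dom, (fun j => Function.update s y b ((semico xs y).2 j)) ∈ S)) ∧
        etaSem A φ (semico xs y).1 (semico xs y).2 S ∧
        (∀ s : ℕ → A.Dom, (fun i => s (xs i)) ∈ R →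
          ∀ b : A.Dom, (fun j => Function.update s y b ((semico xs y).2 j)) ∈ S)

/-- `zetaSem A N φ n xs R` expresses `A ⊨ ζ^{x̄,p}_φ(R)` where `N = p(‖A‖)`: like
`etaSem`, but all second-order quantifiers are sparse, i.e. range only over relations
of cardinality at most `N`. -/
def zetaSem {τ : Vocab} {D : DepFamily} (A : Struc τ) (N : ℕ) :
    TFormula τ D → (n : ℕ) → (Fin n → ℕ) → Set (Fin n → A.Dom) → Prop
  | .base α, _, xs, R =>
      ∀ s : ℕ → A.Dom, (fun i => s (xs i)) ∈ R → α.Sat A s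
  | .atom i ts, _, xs, R =>
      ∃ S : Set (Fin (D.ar i) → A.Dom), S.Finite ∧ S.ncard ≤ N ∧
        (∀ v : Fin (D.ar i) → A.Dom,
          v ∈ S ↔ ∃ s : ℕ → A.Dom,
            (fun j => s (xs j)) ∈ R ∧ (fun j => (ts j).eval A s) = v) ∧
        DepSat A (D.form i) S
  | .tnot φ, n, xs, R => ¬ zetaSem A N φ n xs R
  | .tand φ ψ, n, xs, R => zetaSem A N φ n xs R ∧ zetaSem A N ψ n xs R
  | .tor φ ψ, n, xs, R =>
      ∃ S U : Set (Fin n → A.Dom), S.Finite ∧ S.ncard ≤ N ∧ U.Finite ∧ U.ncard ≤ N ∧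
        (∀ v, v ∈ R ↔ v ∈ S ∨ v ∈ U) ∧ zetaSem A N φ n xs S ∧ zetaSem A N ψ n xs U
  | .tex y φ, _, xs, R =>
      ∃ S : Set (Fin (semico xs y).1 → A.Dom), S.Finite ∧ S.ncard ≤ N ∧
        (∀ s : ℕ → A.Dom,
          (∃ b : A.Dom, (fun i => Function.update s y b (xs i)) ∈ R) ↔
          (∃ b : A.Dom, (fun j => Function.update s y b ((semico xs y).2 j)) ∈ S)) ∧
        zetaSem A N φ (semico xs y).1 (semico xs y).2 S
  | .tall y φ, _, xs, R =>
      ∃ S : Set (Fin (semico xs y).1 → A.Dom), S.Finite ∧ S.ncard ≤ N ∧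
        (∀ s : ℕ → A.Dom,
          (∃ b : A.Dom, (fun i => Function.update s y b (xs i)) ∈ R) ↔
          (∃ b : A.Dom, (fun j => Function.update s y b ((semico xs y).2 j)) ∈ S)) ∧
        zetaSem A N φ (semico xs y).1 (semico xs y).2 S ∧
        (∀ s : ℕ → A.Dom, (fun i => s (xs i)) ∈ R →
          ∀ b : A.Dom, (fun j => Function.update s y b ((semico xs y).2 j)) ∈ S)

/-- `‖A‖`: the size of a finite structure, i.e. the size of the domain plus the sizes of
the interpretations of all symbols of the vocabulary. -/
noncomputable def strucNorm {τ : Vocab} (A : Struc τ)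
    [Fintype τ.Rel] [Fintype τ.Func] : ℕ :=
  Nat.card A.Dom + (∑ R : τ.Rel, Set.ncard { v | A.rels R v }) +
    ∑ f : τ.Func, Nat.card A.Dom ^ τ.fArity f

/-! ## Modal team logic MTL -/

inductive MLFormula : Type where
  | prop : ℕ → MLFormula
  | neg : MLFormula → MLFormula
  | and : MLFormula → MLFormula → MLFormula
  | or : MLFormula → MLFormula → MLFormula
  | box : MLFormula → MLFormula
  | dia : MLFormula → MLFormula

inductive MTLFormula : Type where
  | base : MLFormula → MTLFormula
  | mnot : MTLFormula → MTLFormula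
  | mand : MTLFormula → MTLFormula → MTLFormula
  | mor : MTLFormula → MTLFormula → MTLFormula
  | mbox : MTLFormula → MTLFormula
  | mdia : MTLFormula → MTLFormula

/-- A Kripke structure (with nonempty set of worlds, as usual). -/
structure Kripke : Type 1 where
  W : Type
  nonempty : Nonempty W
  R : W → W → Prop
  V : ℕ → Set W

/-- Classical Kripke semantics of ML. -/
def MLFormula.Sat (K : Kripke) (w : K.W) : MLFormula → Prop
  | .prop i => w ∈ K.V i
  | .neg φ => ¬ φ.Sat K w
  | .and φ ψ => φ.Sat K w ∧ ψ.Sat K w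
  | .or φ ψ => φ.Sat K w ∨ ψ.Sat K w
  | .box φ => ∀ v, K.R w v → φ.Sat K v
  | .dia φ => ∃ v, K.R w v ∧ φ.Sat K v

/-- The image `RT` of a team. -/
def Kripke.img (K : Kripke) (T : Set K.W) : Set K.W := { v | ∃ w ∈ T, K.R w v }

/-- `S` is a successor team of `T`: `S ⊆ RT` and `T ⊆ R⁻¹S`. -/
def Kripke.SuccTeam (K : Kripke) (T S : Set K.W) : Prop :=
  S ⊆ K.img T ∧ ∀ w ∈ T, ∃ v ∈ S, K.R w v

/-- Team semantics of MTL. -/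
def MTLSat (K : Kripke) : MTLFormula → Set K.W → Prop
  | .base α, T => ∀ w ∈ T, α.Sat K w
  | .mnot φ, T => ¬ MTLSat K φ T
  | .mand φ ψ, T => MTLSat K φ T ∧ MTLSat K ψ T
  | .mor φ ψ, T => ∃ S U, S ∪ U = T ∧ MTLSat K φ S ∧ MTLSat K ψ U
  | .mbox φ, T => MTLSat K φ (K.img T)
  | .mdia φ, T => ∃ S, K.SuccTeam T S ∧ MTLSat K φ S

/-! ## The standard translation from MTL to FO²(~) -/

/-- The vocabulary `τ_M`: one binary predicate `R` (index `none`) and unary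
predicates `P_i` (index `some i`). -/
def tauM : Vocab where
  Func := Empty
  fArity := fun e => e.elim
  Rel := Option ℕ
  rArity := fun R => match R with
    | none => 2
    | some _ => 1

/-- The two first-order variables `x` (for `false`) and `y` (for `true`). -/
def vIdx : Bool → ℕ
  | false => 0
  | true => 1

/-- The atom `R a b`. -/
def rAtom (a b : ℕ) : FOFormula tauM :=
  .rel none fun i => if (i : ℕ) = 0 then Term.var a else Term.var b

/-- The atom `P_i v`. -/
def pAtom (i v : ℕ) : FOFormula tauM :=
  .rel (some i) fun _ => Term.var v

/-- The standard translation of classical modal logic ML into FO². -/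
def STml : Bool → MLFormula → FOFormula tauM
  | v, .prop i => pAtom i (vIdx v)
  | v, .neg α => .not (STml v α)
  | v, .and α β => .and (STml v α) (STml v β)
  | v, .or α β => .or (STml v α) (STml v β)
  | v, .dia α => .ex (vIdx !v) (.and (rAtom (vIdx v) (vIdx !v)) (STml (!v) α))
  | v, .box α => .all (vIdx !v) (.or (.not (rAtom (vIdx v) (vIdx !v))) (STml (!v) α))

/-- The standard translation of MTL into FO²(~);
`st_x` is `ST false` and `st_y` is `ST true`. -/
def stt : Bool → MTLFormula → TFormula tauM emptyDeps
  | v, .base α => .base (STml v α)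
  | v, .mnot φ => .tnot (stt v φ)
  | v, .mand φ ψ => .tand (stt v φ) (stt v ψ)
  | v, .mor φ ψ => .tor (stt v φ) (stt v ψ)
  | v, .mdia φ => .tex (vIdx !v) (.tand (.base (rAtom (vIdx v) (vIdx !v))) (stt (!v) φ))
  | v, .mbox φ => .tall (vIdx !v)
      (.tor (.base (.not (rAtom (vIdx v) (vIdx !v))))
            (.tand (.base (rAtom (vIdx v) (vIdx !v))) (stt (!v) φ)))

/-- The first-order interpretation `𝒜(K)` of a Kripke structure. -/
def AK (K : Kripke) : Struc tauM where
  Dom := K.W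
  nonempty := K.nonempty
  funcs := fun f => f.elim
  rels := fun R => match R with
    | none => fun v => K.R (v ⟨0, Nat.zero_lt_two⟩) (v ⟨1, Nat.one_lt_two⟩)
    | some i => fun v => v ⟨0, Nat.zero_lt_one⟩ ∈ K.V i

/-- `T^x`: the team of first-order assignments `w^x` for `w ∈ T`. -/
def teamX (K : Kripke) (T : Set K.W) : Team (AK K) ({0} : Set ℕ) :=
  { s | ∃ w ∈ T, s = fun _ => w }

/-!
A `tauM`-structure `B` is a Kripke structure `B.toKripke` in disguise. The point is that
`st_v(φ)`, evaluated on a team `T`, only sees the set of worlds that `T` assigns to the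
variable `v`, where it behaves exactly like `φ` in MTL: splitting `T` is splitting that set, a
supplementing function for `∃y (Rxy ∧ …)` is a successor team, and the universally
supplemented team cut down by `Rxy` carries the image `RT` at `y`.
-/

namespace Set

variable {α β : Type*}

theorem exists_union_eq_image_iff (g : α → β) (T : Set α) (P Q : Set β → Prop) :
    (∃ S U : Set α, S ∪ U = T ∧ P (g '' S) ∧ Q (g '' U)) ↔
      ∃ S' U' : Set β, S' ∪ U' = g '' T ∧ P S' ∧ Q U' := by
  constructor
  · rintro ⟨S, U, rfl, hS, hU⟩
    exact ⟨g '' S, g '' U, (image_union g S U).symm, hS, hU⟩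
  · rintro ⟨S', U', hsplit, hS', hU'⟩
    have hpre : ∀ V ⊆ g '' T, g '' (T ∩ g ⁻¹' V) = V := fun V hV => by
      rw [image_inter_preimage, inter_eq_right.mpr hV]
    refine ⟨T ∩ g ⁻¹' S', T ∩ g ⁻¹' U', ?_, ?_, ?_⟩
    · rw [← inter_union_distrib_left, ← preimage_union, hsplit]
      exact inter_eq_left.mpr (subset_preimage_image g T)
    · rwa [hpre S' (hsplit ▸ subset_union_left)]
    · rwa [hpre U' (hsplit ▸ subset_union_right)]

theorem exists_union_eq_sep_iff (A : Set α) (q : α → Prop) (P : Set α → Prop) :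
    (∃ S U : Set α, S ∪ U = A ∧ (∀ t ∈ S, ¬ q t) ∧ (∀ t ∈ U, q t) ∧ P U) ↔
      P {t ∈ A | q t} := by
  constructor
  · rintro ⟨S, U, rfl, hS, hU, hP⟩
    convert hP using 1
    ext t
    constructor
    · rintro ⟨htS | htU, hq⟩
      exacts [absurd hq (hS t htS), htU]
    · exact fun htU => ⟨Or.inr htU, hU t htU⟩
  · intro hP
    refine ⟨{t ∈ A | ¬ q t}, {t ∈ A | q t}, ?_, fun t ht => ht.2, fun t ht => ht.2, hP⟩
    rw [← sep_or]
    exact sep_eq_self_iff_mem_true.mpr fun t _ => em' (q t)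

end Set

namespace Assign

variable {τ : Vocab} {A : Struc τ} {X : Set ℕ}

theorem toTotal_of_mem (s : Assign A X) {z : ℕ} (hz : z ∈ X) : s.toTotal z = s ⟨z, hz⟩ :=
  dif_pos hz

-- Also outside `X ∪ {y}`, where both sides take the same junk value.
theorem toTotal_supp (s : Assign A X) (y : ℕ) (a : A.Dom) :
    (s.supp y a).toTotal = Function.update s.toTotal y a := by
  funext n
  by_cases hny : n = y
  · subst hny
    simp [toTotal, supp]
  · have hmem : n ∈ X ∪ {y} ↔ n ∈ X := by simp [hny]
    simp only [toTotal, supp, Function.update_of_ne hny, hmem]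
    split_ifs <;> simp_all

end Assign

namespace Team

variable {τ : Vocab} {A : Struc τ} {X : Set ℕ}

noncomputable def valuesAt (T : Team A X) (z : ℕ) : Set A.Dom :=
  (fun s => s.toTotal z) '' T

theorem forall_mem_supp (T : Team A X) (y : ℕ) (f : Assign A X → Set A.Dom)
    (p : (ℕ → A.Dom) → Prop) :
    (∀ t ∈ T.supp y f, p t.toTotal) ↔
      ∀ s ∈ T, ∀ a ∈ f s, p (Function.update s.toTotal y a) := by
  simp only [supp, Set.mem_ofPred_eq]
  constructor
  · intro h s hs a ha
    rw [← Assign.toTotal_supp]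
    exact h _ ⟨s, hs, a, ha, rfl⟩
  · rintro h t ⟨s, hs, a, ha, rfl⟩
    rw [Assign.toTotal_supp]
    exact h s hs a ha

theorem valuesAt_supp_self (T : Team A X) (y : ℕ) (f : Assign A X → Set A.Dom) :
    (T.supp y f).valuesAt y = ⋃ s ∈ T, f s := by
  ext a
  simp only [valuesAt, supp, Set.mem_image, Set.mem_ofPred_eq, Set.mem_iUnion, exists_prop]
  constructor
  · rintro ⟨_, ⟨s, hs, b, hb, rfl⟩, rfl⟩
    rw [Assign.toTotal_supp, Function.update_self]
    exact ⟨s, hs, hb⟩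
  · rintro ⟨s, hs, ha⟩
    exact ⟨_, ⟨s, hs, a, ha, rfl⟩, by rw [Assign.toTotal_supp, Function.update_self]⟩

theorem sep_supp_univ (T : Team A X) (y : ℕ) (q : (ℕ → A.Dom) → Prop) :
    {t ∈ T.supp y (fun _ => Set.univ) | q t.toTotal} =
      T.supp y (fun s => {a | q (Function.update s.toTotal y a)}) := by
  ext t
  simp only [supp, Set.mem_ofPred_eq, Set.mem_univ, true_and]
  constructor
  · rintro ⟨⟨s, hs, a, rfl⟩, hq⟩
    exact ⟨s, hs, a, by rwa [← Assign.toTotal_supp], rfl⟩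
  · rintro ⟨s, hs, a, hq, rfl⟩
    exact ⟨⟨s, hs, a, rfl⟩, by rwa [Assign.toTotal_supp]⟩

end Team

namespace Kripke

variable (K : Kripke) {α : Type*}

theorem img_image (g : α → K.W) (T : Set α) :
    K.img (g '' T) = ⋃ s ∈ T, {v | K.R (g s) v} := by
  ext v
  simp [img]

theorem exists_succTeam_image_iff (g : α → K.W) (T : Set α) (P : Set K.W → Prop) :
    (∃ S, K.SuccTeam (g '' T) S ∧ P S) ↔
      ∃ f : α → Set K.W, (∀ s ∈ T, (f s).Nonempty) ∧
        (∀ s ∈ T, ∀ v ∈ f s, K.R (g s) v) ∧ P (⋃ s ∈ T, f s) := by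
  constructor
  · rintro ⟨S, ⟨hS, hcover⟩, hP⟩
    refine ⟨fun s => {v ∈ S | K.R (g s) v}, fun s hs => ?_, fun s _ v hv => hv.2, ?_⟩
    · obtain ⟨v, hv, hR⟩ := hcover (g s) (Set.mem_image_of_mem g hs)
      exact ⟨v, hv, hR⟩
    · convert hP using 1
      ext v
      simp only [Set.mem_iUnion, Set.mem_ofPred_eq, exists_prop]
      refine ⟨fun ⟨_, _, hv, _⟩ => hv, fun hv => ?_⟩
      obtain ⟨_, ⟨s, hs, rfl⟩, hR⟩ := hS hv
      exact ⟨s, hs, hv, hR⟩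
  · rintro ⟨f, hne, hR, hP⟩
    refine ⟨_, ⟨fun v hv => ?_, fun _ ⟨s, hs, hw⟩ => ?_⟩, hP⟩
    · simp only [Set.mem_iUnion, exists_prop] at hv
      obtain ⟨s, hs, hv⟩ := hv
      exact ⟨g s, Set.mem_image_of_mem g hs, hR s hs v hv⟩
    · obtain ⟨v, hv⟩ := hne s hs
      exact ⟨v, Set.mem_biUnion hs hv, hw ▸ hR s hs v hv⟩

end Kripke

def Struc.toKripke (B : Struc tauM) : Kripke where
  W := B.Dom
  nonempty := B.nonempty
  R := fun w u => B.rels none (fun i => if (i : ℕ) = 0 then w else u)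
  V := fun i => { w | B.rels (some i) (fun _ => w) }

theorem rAtom_sat_iff (B : Struc tauM) (s : ℕ → B.Dom) (a b : ℕ) :
    (rAtom a b).Sat B s ↔ B.toKripke.R (s a) (s b) := by
  refine iff_of_eq (congrArg (B.rels none) (funext fun i => ?_))
  show Term.eval B s (if (i : ℕ) = 0 then Term.var a else Term.var b) = _
  split <;> rfl

theorem vIdx_ne_vIdx_not (v : Bool) : vIdx v ≠ vIdx (!v) := by
  cases v <;> decide

theorem STml_sat_iff (B : Struc tauM) (α : MLFormula) (v : Bool) (s : ℕ → B.Dom) :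
    (STml v α).Sat B s ↔ α.Sat B.toKripke (s (vIdx v)) := by
  induction α generalizing v s with
  | prop i => rfl
  | neg α ih => exact not_congr (ih v s)
  | and α β ihα ihβ => exact and_congr (ihα v s) (ihβ v s)
  | or α β ihα ihβ => exact or_congr (ihα v s) (ihβ v s)
  | box α ih =>
    refine forall_congr' fun a => ?_
    rw [FOFormula.Sat, FOFormula.Sat, rAtom_sat_iff, ih, Function.update_self,
      Function.update_of_ne (vIdx_ne_vIdx_not v), or_iff_not_imp_left, not_not]
  | dia α ih =>
    refine exists_congr fun a => ?_
    rw [FOFormula.Sat, rAtom_sat_iff, ih, Function.update_self,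
      Function.update_of_ne (vIdx_ne_vIdx_not v)]

theorem forall_mem_supp_rAtom_sat_iff {B : Struc tauM} {X : Set ℕ} (T : Team B X) {x y : ℕ}
    (hxy : x ≠ y) (f : Assign B X → Set B.Dom) :
    (∀ t ∈ T.supp y f, (rAtom x y).Sat B t.toTotal) ↔
      ∀ s ∈ T, ∀ a ∈ f s, B.toKripke.R (s.toTotal x) a := by
  rw [Team.forall_mem_supp _ _ _ (fun s => (rAtom x y).Sat B s)]
  simp only [rAtom_sat_iff, Function.update_self, Function.update_of_ne hxy]

theorem TSat_stt_iff (φ : MTLFormula) (v : Bool) (B : Struc tauM) (X : Set ℕ) (T : Team B X) :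
    TSat B (stt v φ) X T ↔ MTLSat B.toKripke φ (T.valuesAt (vIdx v)) := by
  induction φ generalizing v X T with
  | base α =>
    simp only [stt, TSat, MTLSat, STml_sat_iff]
    exact (Set.forall_mem_image (f := fun s : Assign B X => s.toTotal (vIdx v))
      (p := α.Sat B.toKripke)).symm
  | mnot φ ih => exact not_congr (ih v X T)
  | mand φ ψ ihφ ihψ => exact and_congr (ihφ v X T) (ihψ v X T)
  | mor φ ψ ihφ ihψ =>
    simp only [stt, TSat, MTLSat, ihφ, ihψ]
    exact Set.exists_union_eq_image_iff (fun s => s.toTotal (vIdx v)) T _ _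
  | mdia φ ih =>
    simp only [stt, TSat, MTLSat, ih, forall_mem_supp_rAtom_sat_iff T (vIdx_ne_vIdx_not v),
      Team.valuesAt_supp_self]
    exact (Kripke.exists_succTeam_image_iff B.toKripke (fun s => s.toTotal (vIdx v)) T _).symm
  | mbox φ ih =>
    simp only [stt, TSat, MTLSat]
    refine (Set.exists_union_eq_sep_iff _ (fun t => (rAtom (vIdx v) (vIdx !v)).Sat B t.toTotal)
      (TSat B (stt (!v) φ) _)).trans ?_
    rw [ih, Team.sep_supp_univ T _ (fun s => (rAtom (vIdx v) (vIdx !v)).Sat B s),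
      Team.valuesAt_supp_self]
    simp only [rAtom_sat_iff, Function.update_self, Function.update_of_ne (vIdx_ne_vIdx_not v)]
    exact Iff.of_eq (congrArg _
      (Kripke.img_image B.toKripke (fun s : Assign B X => s.toTotal (vIdx v)) T).symm)

theorem valuesAt_teamX (K : Kripke) (T : Set K.W) : (teamX K T).valuesAt 0 = T := by
  ext w
  constructor
  · rintro ⟨_, ⟨u, hu, rfl⟩, rfl⟩
    have hval : Assign.toTotal (A := AK K) (X := {0}) (fun _ => u) 0 = u :=
      Assign.toTotal_of_mem _ (Set.mem_singleton 0)
    exact Eq.mpr (congrArg (· ∈ T) hval) hu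
  · intro hw
    exact ⟨fun _ => w, ⟨w, hw, rfl⟩, Assign.toTotal_of_mem _ (Set.mem_singleton 0)⟩

/-- `φ ∈ MTL` is satisfiable iff its standard translation
`st_x(φ) ∈ FO²(~)` is satisfiable in a team whose domain contains `{x}`
(here `x` is the variable `0`). -/
theorem statement18 (φ : MTLFormula) :
    (∃ (K : Kripke) (T : Set K.W), MTLSat K φ T) ↔
    (∃ (B : Struc tauM) (X : Set ℕ) (T : Team B X),
      ({0} : Set ℕ) ⊆ X ∧ TSat B (stt false φ) X T) := by
  constructor
  · rintro ⟨K, T, hT⟩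
    refine ⟨AK K, {0}, teamX K T, subset_rfl, (TSat_stt_iff φ false _ _ _).mpr ?_⟩
    -- `(AK K).toKripke` is `K` up to unfolding.
    show MTLSat K φ ((teamX K T).valuesAt 0)
    rwa [valuesAt_teamX]
  · rintro ⟨B, X, T, -, hT⟩
    exact ⟨B.toKripke, T.valuesAt (vIdx false), (TSat_stt_iff φ false B X T).mp hT⟩
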